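/- arXiv:1109.4593 — 10 statements merged into one kernel-verified Lean document; each statement's English description precedes it below -/
import Mathlib

section
/- Let α, β be coprime positive integers. Every positive integer n has a unique presentation n = pαβ - aα - bβ with integers p > 0, 0 ≤ a < β and 0 ≤ b < α. -/
/-!
Reducing `n = pαβ - aα - bβ` modulo `β` gives `aα ≡ -n (mod β)`; as `α` is invertible modulo `β`,
this pins down `a ∈ [0, β)`. Symmetrically `b ∈ [0, α)` is pinned down modulo `α`. Coprimality
then makes `αβ` divide `n + aα + bβ`, which fixes `p`, and `p > 0` because `n > 0`.
-/

namespace Int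

theorem eq_of_dvd_add_mul_of_dvd_add_mul {x m n a b : ℤ} (h : IsCoprime x m)
    (ha₀ : 0 ≤ a) (ha : a < m) (hb₀ : 0 ≤ b) (hb : b < m)
    (hna : m ∣ n + a * x) (hnb : m ∣ n + b * x) : a = b := by
  have hmx : m ∣ (b - a) * x := by
    rw [show (b - a) * x = n + b * x - (n + a * x) by ring]
    exact dvd_sub hnb hna
  have hab : a ≡ b [ZMOD m] := Int.modEq_iff_dvd.mpr (h.symm.dvd_of_dvd_mul_right hmx)
  rwa [Int.ModEq, Int.emod_eq_of_lt ha₀ ha, Int.emod_eq_of_lt hb₀ hb] at hab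

theorem existsUnique_dvd_add_mul {x m : ℤ} (hm : 0 < m) (h : IsCoprime x m) (n : ℤ) :
    ∃! a : ℤ, 0 ≤ a ∧ a < m ∧ m ∣ n + a * x := by
  obtain ⟨u, v, huv⟩ := id h
  -- `u` is an inverse of `x` modulo `m`, so `a := -n u mod m` works
  have hdvd : m ∣ n + -n * u % m * x := by
    have hcongr : n + -n * u % m * x ≡ n + -n * u * x [ZMOD m] :=
      ((Int.mod_modEq _ m).mul_right x).add_left n
    exact Int.modEq_zero_iff_dvd.mp <|
      hcongr.trans (Int.modEq_zero_iff_dvd.mpr ⟨n * v, by linear_combination (-n) * huv⟩)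
  refine ⟨-n * u % m, ⟨Int.emod_nonneg _ hm.ne', Int.emod_lt_of_pos _ hm, hdvd⟩, ?_⟩
  rintro a ⟨ha₀, ha, hna⟩
  exact eq_of_dvd_add_mul_of_dvd_add_mul h ha₀ ha (Int.emod_nonneg _ hm.ne')
    (Int.emod_lt_of_pos _ hm) hna hdvd

end Int

/-- Corollary 3.5: every positive integer `n` has a unique presentation
`n = pαβ - aα - bβ` with `p > 0`, `0 ≤ a < β` and `0 ≤ b < α`. -/
theorem unique_presentation (α β : ℕ) (hα : 0 < α) (hβ : 0 < β)
    (hcop : Nat.Coprime α β) (n : ℤ) (hn : 0 < n) :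
    ∃! t : ℤ × ℤ × ℤ, 0 < t.1 ∧ 0 ≤ t.2.1 ∧ t.2.1 < β ∧ 0 ≤ t.2.2 ∧ t.2.2 < α ∧
      n = t.1 * ((α : ℤ) * β) - t.2.1 * α - t.2.2 * β := by
  have hcop : IsCoprime (α : ℤ) β := Nat.isCoprime_iff_coprime.mpr hcop
  obtain ⟨a, ⟨ha₀, ha, hna⟩, ha_unique⟩ := Int.existsUnique_dvd_add_mul (by omega) hcop n
  obtain ⟨b, ⟨hb₀, hb, hnb⟩, hb_unique⟩ := Int.existsUnique_dvd_add_mul (by omega) hcop.symm n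
  obtain ⟨p, hp⟩ : (α : ℤ) * β ∣ n + a * α + b * β :=
    hcop.mul_dvd (by simpa [add_right_comm] using hnb.add (dvd_mul_left (α : ℤ) a))
      (hna.add (dvd_mul_left _ b))
  have hp₀ : 0 < p := by
    refine pos_of_mul_pos_right (a := (α : ℤ) * β) ?_ (by positivity)
    rw [← hp]
    positivity
  refine ⟨(p, a, b), ⟨hp₀, ha₀, ha, hb₀, hb, by linear_combination hp⟩, ?_⟩
  rintro ⟨q, c, d⟩ ⟨-, hc₀, hc, hd₀, hd, rfl⟩
  obtain rfl : c = a := ha_unique c ⟨hc₀, hc, q * α - d, by ring⟩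
  obtain rfl : d = b := hb_unique d ⟨hd₀, hd, q * β - c, by ring⟩
  have hqp : q = p := mul_left_cancel₀ (by positivity : (α : ℤ) * β ≠ 0) (by linear_combination hp)
  rw [hqp]
end

section
/- Let α, β be coprime positive integers, and let r be an integer with 0 < r < β. If x is an integer with 0 < x < rα and x ≡ rα (mod β), then x is a gap of ⟨α, β⟩. -/
/-- Membership in the numerical semigroup ⟨α, β⟩ = ℕ₀α + ℕ₀β, viewed inside ℤ. -/
def SG (α β : ℕ) : Set ℤ := {e : ℤ | ∃ a b : ℕ, e = (a : ℤ) * α + (b : ℤ) * β}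

/-- A gap of ⟨α, β⟩: a positive integer not in the semigroup. -/
def IsGap (α β : ℕ) (e : ℤ) : Prop := 0 < e ∧ e ∉ SG α β

/-!
If `x = aα + bβ` lies in the residue class of `rα` modulo `β`, then `β ∣ (r - a)α`, so by
coprimality `a ≡ r (mod β)`; as `0 ≤ a` and `r < β` this forces `r ≤ a`, whence
`x ≥ aα ≥ rα`. So `rα` is the least element of ⟨α, β⟩ in its residue class, and every
positive `x < rα` in that class is a gap.
-/

theorem dvd_sub_of_dvd_mul_sub_mul_add_mul {α β : ℕ} (hcop : Nat.Coprime α β) {r : ℤ}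
    (a b : ℤ) (h : (β : ℤ) ∣ r * α - (a * α + b * β)) : (β : ℤ) ∣ r - a := by
  have hdvd : (β : ℤ) ∣ (r - a) * α := by
    have hsplit : (r - a) * α = (r * α - (a * α + b * β)) + b * β := by ring
    rw [hsplit]
    exact dvd_add h (dvd_mul_left _ _)
  exact (Nat.isCoprime_iff_coprime.mpr hcop.symm).dvd_of_dvd_mul_right hdvd

theorem Int.le_of_dvd_sub_of_lt {β : ℤ} {r a : ℤ} (ha : 0 ≤ a) (hrβ : r < β) (h : β ∣ r - a) :
    r ≤ a := by
  by_contra! hlt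
  have := Int.le_of_dvd (sub_pos.mpr hlt) h
  linarith

theorem SG.mul_le_of_dvd_sub {α β : ℕ} (hcop : Nat.Coprime α β) {r : ℤ} (hrβ : r < β)
    {x : ℤ} (hx : x ∈ SG α β) (hcong : (β : ℤ) ∣ r * α - x) : r * α ≤ x := by
  obtain ⟨a, b, rfl⟩ := hx
  have hra : r ≤ a :=
    Int.le_of_dvd_sub_of_lt (Int.natCast_nonneg a) hrβ
      (dvd_sub_of_dvd_mul_sub_mul_add_mul hcop a b hcong)
  calc r * α ≤ a * α := mul_le_mul_of_nonneg_right hra (Int.natCast_nonneg α)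
    _ ≤ a * α + b * β := le_add_of_nonneg_right (by positivity)

theorem gap_of_lt_congruent_general (α β : ℕ)
    (hcop : Nat.Coprime α β) (r : ℤ) (hrβ : r < β)
    (x : ℤ) (hx0 : 0 < x) (hxr : x < r * α) (hcong : (β : ℤ) ∣ (r * α - x)) :
    IsGap α β x :=
  ⟨hx0, fun hx => hxr.not_ge (SG.mul_le_of_dvd_sub hcop hrβ hx hcong)⟩

/-- Corollary 3.9: if `0 < r < β`, `0 < x < rα` and `x ≡ rα (mod β)`,
then `x` is a gap of ⟨α, β⟩. -/
theorem gap_of_lt_congruent (α β : ℕ) (hα : 0 < α) (hβ : 0 < β)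
    (hcop : Nat.Coprime α β) (r : ℤ) (hr0 : 0 < r) (hrβ : r < β)
    (x : ℤ) (hx0 : 0 < x) (hxr : x < r * α) (hcong : (β : ℤ) ∣ (r * α - x)) :
    IsGap α β x :=
  gap_of_lt_congruent_general α β hcop r hrβ x hx0 hxr hcong
end

section
/- Let α, β be coprime positive integers and let i₁, i₂ be gaps of ⟨α, β⟩ with presentations iₖ = αβ - aₖα - bₖβ where 1 ≤ aₖ < β, 1 ≤ bₖ < α. Then |i₁ - i₂| is a gap of ⟨α, β⟩ if and only if (a₂ - a₁)(b₂ - b₁) < 0. -/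
/-- Definition 3.10: an (α,β)-fundamental couple, given by two integer sequences
`I, J` (indexed by `0, …, m`; values beyond `m` are irrelevant). -/
def IsFundamentalCouple (α β m : ℕ) (I J : ℕ → ℤ) : Prop :=
  -- (0)
  I 0 = 0 ∧
  -- (1)
  (∀ k, 1 ≤ k → k ≤ m → IsGap α β (I k)) ∧
  (∀ k, 1 ≤ k → k < m → IsGap α β (J k)) ∧
  J 0 ≤ (α : ℤ) * β ∧ J m ≤ (α : ℤ) * β ∧
  -- (2)
  (∀ k, k ≤ m → (α : ℤ) ∣ (J k - I k) ∧ I k < J k) ∧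
  (∀ k, k < m → (β : ℤ) ∣ (J k - I (k + 1)) ∧ I (k + 1) < J k) ∧
  ((β : ℤ) ∣ (J m - I 0) ∧ I 0 ≤ J m) ∧
  -- (3)
  (∀ k l, 1 ≤ k → k < l → l ≤ m → IsGap α β |I k - I l|)

/-- Definition 3.22 a): an (α,β)-balanced couple. -/
def IsBalancedCouple (α β m : ℕ) (I J : ℕ → ℤ) : Prop :=
  (∀ k, k ≤ m → (α : ℤ) ∣ (J k - I k) ∧ I k ≤ J k) ∧
  (∀ k, k < m → (β : ℤ) ∣ (J k - I (k + 1)) ∧ I (k + 1) ≤ J k) ∧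
  ((β : ℤ) ∣ (J m - I 0) ∧ I 0 ≤ J m)

/-- Definition 3.22 b): a reduced (α,β)-balanced couple. -/
def IsReducedBalancedCouple (α β m : ℕ) (I J : ℕ → ℤ) : Prop :=
  IsBalancedCouple α β m I J ∧
  (∀ k, k ≤ m → I k < J k) ∧
  (∀ k, k < m → I (k + 1) < J k) ∧
  I 0 < J m ∧
  (∀ k, 1 ≤ k → k ≤ m → min (J (k - 1) - I k) (J k - I k) < (α : ℤ) * β) ∧
  min (J m - I 0) (J 0 - I 0) < (α : ℤ) * β ∧
  (∀ k, k < m → min (J k - I k) (J k - I (k + 1)) < (α : ℤ) * β) ∧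
  min (J m - I m) (J m - I 0) < (α : ℤ) * β

/-- Condition (⋆) for a coefficient sequence `h : ℤ → ℤ`. -/
def StarCondition (α β : ℕ) (h : ℤ → ℤ) : Prop :=
  ∀ (m : ℕ) (I J : ℕ → ℤ), IsFundamentalCouple α β m I J →
    ∀ n : ℤ, ∑ k ∈ Finset.range (m + 1), h (I k + n) ≤
      ∑ k ∈ Finset.range (m + 1), h (J k + n)

theorem SG_comm (α β : ℕ) : SG α β = SG β α := by
  ext e
  constructor <;> rintro ⟨a, b, h⟩ <;> exact ⟨b, a, by rw [h, add_comm]⟩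

theorem zero_mem_SG (α β : ℕ) : (0 : ℤ) ∈ SG α β := ⟨0, 0, by simp⟩

theorem abs_mul_add_mul_mem_SG {α β : ℕ} {A B : ℤ} (h : 0 ≤ A * B) :
    |A * α + B * β| ∈ SG α β := by
  have hsame : 0 ≤ A * α ∧ 0 ≤ B * β ∨ A * α ≤ 0 ∧ B * β ≤ 0 := by
    rcases mul_nonneg_iff.mp h with ⟨hA, hB⟩ | ⟨hA, hB⟩
    · exact .inl ⟨by positivity, by positivity⟩
    · exact .inr ⟨mul_nonpos_of_nonpos_of_nonneg hA (by positivity),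
        mul_nonpos_of_nonpos_of_nonneg hB (by positivity)⟩
  refine ⟨A.natAbs, B.natAbs, ?_⟩
  rw [abs_add_eq_add_abs_iff _ _ |>.mpr hsame, abs_mul, abs_mul, Int.natCast_natAbs,
    Int.natCast_natAbs, Nat.abs_cast, Nat.abs_cast]

theorem mul_sub_mul_notMem_SG {α β : ℕ} (hcop : Nat.Coprime α β) {A B : ℤ}
    (hA : 0 < A) (hAβ : A < β) (hB : 0 < B) : A * α - B * β ∉ SG α β := by
  rintro ⟨x, y, hxy⟩
  have hβ : (0 : ℤ) < β := hA.trans hAβ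
  have hrel : (A - x) * α = (y + B) * β := by linear_combination hxy
  have hpos : 0 < A - x := by
    refine pos_of_mul_pos_left (a := (A - x)) ?_ (Int.natCast_nonneg α)
    rw [hrel]; positivity
  have hdvd : (β : ℤ) ∣ A - x :=
    (Nat.isCoprime_iff_coprime.mpr hcop.symm).dvd_of_dvd_mul_right ⟨y + B, by rw [hrel, mul_comm]⟩
  have := Int.le_of_dvd hpos hdvd
  omega

theorem isGap_abs_mul_sub_mul {α β : ℕ} (hcop : Nat.Coprime α β) {A B : ℤ}
    (hA : 0 < A) (hAβ : A < β) (hB : 0 < B) (hBα : B < α) : IsGap α β |A * α - B * β| := by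
  have hnot : A * α - B * β ∉ SG α β := mul_sub_mul_notMem_SG hcop hA hAβ hB
  have hnot' : -(A * α - B * β) ∉ SG α β := by
    rw [SG_comm, neg_sub]; exact mul_sub_mul_notMem_SG hcop.symm hB hBα hA
  have hne : A * α - B * β ≠ 0 := fun h => hnot (h ▸ zero_mem_SG α β)
  refine ⟨abs_pos.mpr hne, ?_⟩
  rcases abs_choice (A * α - B * β) with h | h <;> rw [h]
  exacts [hnot, hnot']

theorem isGap_abs_mul_add_mul_iff {α β : ℕ} (hcop : Nat.Coprime α β) {A B : ℤ}
    (hA : |A| < β) (hB : |B| < α) : IsGap α β |A * α + B * β| ↔ A * B < 0 := by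
  refine ⟨fun hgap => ?_, fun hAB => ?_⟩
  · by_contra! hAB
    exact hgap.2 (abs_mul_add_mul_mem_SG hAB)
  rw [abs_lt] at hA hB
  rcases mul_neg_iff.mp hAB with ⟨hA0, hB0⟩ | ⟨hA0, hB0⟩
  · rw [show A * α + B * β = A * α - -B * β by ring]
    exact isGap_abs_mul_sub_mul hcop hA0 hA.2 (neg_pos.mpr hB0) (by omega)
  · rw [← abs_neg, show -(A * α + B * β) = -A * α - B * β by ring]
    exact isGap_abs_mul_sub_mul hcop (neg_pos.mpr hA0) (by omega) hB0 hB.2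

theorem diff_gap_iff_general (α β : ℕ) (hcop : Nat.Coprime α β)
    (i₁ i₂ a₁ b₁ a₂ b₂ : ℤ)
    (ha₁ : 1 ≤ a₁) (ha₁' : a₁ < β) (hb₁ : 1 ≤ b₁) (hb₁' : b₁ < α)
    (ha₂ : 1 ≤ a₂) (ha₂' : a₂ < β) (hb₂ : 1 ≤ b₂) (hb₂' : b₂ < α)
    (hi₁ : i₁ = (α : ℤ) * β - a₁ * α - b₁ * β)
    (hi₂ : i₂ = (α : ℤ) * β - a₂ * α - b₂ * β) :
    IsGap α β |i₁ - i₂| ↔ (a₂ - a₁) * (b₂ - b₁) < 0 := by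
  have hdiff : i₁ - i₂ = (a₂ - a₁) * α + (b₂ - b₁) * β := by rw [hi₁, hi₂]; ring
  rw [hdiff]
  exact isGap_abs_mul_add_mul_iff hcop (abs_sub_lt_iff.mpr ⟨by omega, by omega⟩)
    (abs_sub_lt_iff.mpr ⟨by omega, by omega⟩)

/-- Lemma 3.19 a): for gaps `i₁ = αβ - a₁α - b₁β` and `i₂ = αβ - a₂α - b₂β`,
the difference `|i₁ - i₂|` is a gap iff `(a₂ - a₁)(b₂ - b₁) < 0`. -/
theorem diff_gap_iff (α β : ℕ) (hα : 0 < α) (hβ : 0 < β) (hcop : Nat.Coprime α β)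
    (i₁ i₂ a₁ b₁ a₂ b₂ : ℤ)
    (ha₁ : 1 ≤ a₁) (ha₁' : a₁ < β) (hb₁ : 1 ≤ b₁) (hb₁' : b₁ < α)
    (ha₂ : 1 ≤ a₂) (ha₂' : a₂ < β) (hb₂ : 1 ≤ b₂) (hb₂' : b₂ < α)
    (hi₁ : i₁ = (α : ℤ) * β - a₁ * α - b₁ * β)
    (hi₂ : i₂ = (α : ℤ) * β - a₂ * α - b₂ * β)
    (hne : i₁ ≠ i₂) :
    IsGap α β |i₁ - i₂| ↔ (a₂ - a₁) * (b₂ - b₁) < 0 :=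
  diff_gap_iff_general α β hcop i₁ i₂ a₁ b₁ a₂ b₂ ha₁ ha₁' hb₁ hb₁' ha₂ ha₂' hb₂ hb₂' hi₁ hi₂
end

section
/- Let α, β be coprime positive integers and let e = αβ - aα - bβ be a gap of ⟨α, β⟩ (with 1 ≤ a < β, 1 ≤ b < α). Then the pair of sequences I = (0, e), J = ((β - a)α, (α - b)β) forms an (α, β)-fundamental couple. -/
/-!
Across the gap `e = αβ - aα - bβ` both differences are explicit multiples of the generators,
`(α - b)β - e = aα` and `(β - a)α - e = bβ`, so every condition of a fundamental couple of
length one reduces to a sign check; condition (3) is vacuous for a single gap.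
-/

theorem isFundamentalCouple_one_iff {α β : ℕ} {I J : ℕ → ℤ} :
    IsFundamentalCouple α β 1 I J ↔
      I 0 = 0 ∧ IsGap α β (I 1) ∧ J 0 ≤ (α : ℤ) * β ∧ J 1 ≤ (α : ℤ) * β ∧
      ((α : ℤ) ∣ J 0 - I 0 ∧ I 0 < J 0) ∧ ((α : ℤ) ∣ J 1 - I 1 ∧ I 1 < J 1) ∧
      ((β : ℤ) ∣ J 0 - I 1 ∧ I 1 < J 0) ∧ ((β : ℤ) ∣ J 1 - I 0 ∧ I 0 ≤ J 1) := by
  simp only [IsFundamentalCouple, Nat.le_one_iff_eq_zero_or_eq_one, Nat.lt_one_iff]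
  constructor
  · rintro ⟨hI, hgap, -, hJ0, hJ1, hα, hβ, hβ', -⟩
    exact ⟨hI, hgap 1 le_rfl (.inr rfl), hJ0, hJ1, hα 0 (.inl rfl), hα 1 (.inr rfl),
      hβ 0 rfl, hβ'⟩
  · rintro ⟨hI, hgap, hJ0, hJ1, hα0, hα1, hβ0, hβ'⟩
    refine ⟨hI, ?_, fun k hk h => by omega, hJ0, hJ1, ?_, fun k hk => hk ▸ hβ0, hβ',
      fun k l hk hkl hl => by omega⟩
    · rintro k hk (rfl | rfl)
      exacts [absurd hk (by decide), hgap]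
    · rintro k (rfl | rfl)
      exacts [hα0, hα1]

theorem fundamental_couple_of_gap_general (α β : ℕ) (e a b : ℤ)
    (ha : 1 ≤ a) (ha' : a < β) (hb : 1 ≤ b) (hb' : b < α)
    (he : e = (α : ℤ) * β - a * α - b * β) (hgap : IsGap α β e) :
    IsFundamentalCouple α β 1 (fun k => if k = 0 then 0 else e)
      (fun k => if k = 0 then ((β : ℤ) - a) * α else ((α : ℤ) - b) * β) := by
  rw [isFundamentalCouple_one_iff]
  simp only [if_true, one_ne_zero, if_false, sub_zero, true_and]
  have hα : (0 : ℤ) < α := by omega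
  have hβ : (0 : ℤ) < β := by omega
  have hJ1 : ((α : ℤ) - b) * β - e = a * α := by rw [he]; ring
  have hJ0 : ((β : ℤ) - a) * α - e = b * β := by rw [he]; ring
  refine ⟨hgap, by nlinarith, by nlinarith, ⟨dvd_mul_left _ _, by nlinarith⟩,
    ⟨hJ1 ▸ dvd_mul_left _ _, by nlinarith⟩, ⟨hJ0 ▸ dvd_mul_left _ _, by nlinarith⟩,
    ⟨dvd_mul_left _ _, by nlinarith⟩⟩

/-- Remark 3.11: for a gap `e = αβ - aα - bβ`, the couple
`[(0, e), ((β - a)α, (α - b)β)]` is an (α,β)-fundamental couple. -/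
theorem fundamental_couple_of_gap (α β : ℕ) (hα : 0 < α) (hβ : 0 < β)
    (hcop : Nat.Coprime α β) (e a b : ℤ)
    (ha : 1 ≤ a) (ha' : a < β) (hb : 1 ≤ b) (hb' : b < α)
    (he : e = (α : ℤ) * β - a * α - b * β) (hgap : IsGap α β e) :
    IsFundamentalCouple α β 1 (fun k => if k = 0 then 0 else e)
      (fun k => if k = 0 then ((β : ℤ) - a) * α else ((α : ℤ) - b) * β) :=
  fundamental_couple_of_gap_general α β e a b ha ha' hb hb' he hgap
end

section
/- Let α, β be coprime positive integers. Any (α, β)-fundamental couple has length at most α, i.e., if [I, J] is a fundamental couple with I = (i₀, ..., iₘ) then m + 1 ≤ α. -/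
/-!
Two distinct entries of `I` never agree modulo `α`: `I 0 = 0` and each `I k` with `k ≥ 1` is a gap,
and so is `|I k - I l|` for `1 ≤ k < l`, while no gap is a multiple of `α`. Hence `k ↦ I k mod α`
is injective on `{0, …, m}`, and the pigeonhole principle gives `m + 1 ≤ α`.
-/

theorem IsGap.not_dvd {α β : ℕ} {e : ℤ} (he : IsGap α β e) : ¬ (α : ℤ) ∣ e := by
  rintro ⟨q, rfl⟩
  have hq : 0 ≤ q := by
    by_contra! hq
    exact (mul_nonpos_of_nonneg_of_nonpos (Int.natCast_nonneg α) hq.le).not_gt he.1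
  exact he.2 ⟨q.toNat, 0, by push_cast [Int.toNat_of_nonneg hq]; ring⟩

namespace IsFundamentalCouple

variable {α β m : ℕ} {I J : ℕ → ℤ}

theorem not_dvd_sub (hFC : IsFundamentalCouple α β m I J) {k l : ℕ} (hkl : k < l) (hlm : l ≤ m) :
    ¬ (α : ℤ) ∣ I k - I l := by
  obtain ⟨hI0, hIgap, -, -, -, -, -, -, hdiff⟩ := hFC
  rcases Nat.eq_zero_or_pos k with rfl | hk
  · simpa [hI0] using (hIgap l (by omega) hlm).not_dvd
  · simpa using (hdiff k l hk hkl hlm).not_dvd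

theorem injOn_intCast_zmod (hFC : IsFundamentalCouple α β m I J) :
    Set.InjOn (fun k => (I k : ZMod α)) (Finset.range (m + 1)) := by
  intro k hk l hl hkl
  simp only [Finset.coe_range, Set.mem_Iio] at hk hl
  rw [ZMod.intCast_eq_intCast_iff_dvd_sub] at hkl
  by_contra hne
  rcases Nat.lt_or_gt_of_ne hne with h | h
  · exact hFC.not_dvd_sub h (by omega) (by simpa using hkl.neg_right)
  · exact hFC.not_dvd_sub h (by omega) hkl

end IsFundamentalCouple

theorem fundamental_couple_length_le_general (α β : ℕ) (hα : 0 < α) (m : ℕ) (I J : ℕ → ℤ)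
    (hFC : IsFundamentalCouple α β m I J) :
    m + 1 ≤ α := by
  have : NeZero α := ⟨hα.ne'⟩
  calc m + 1 = (Finset.range (m + 1)).card := (Finset.card_range _).symm
    _ ≤ Fintype.card (ZMod α) :=
      Finset.card_le_card_of_injOn _ (fun _ _ => Finset.mem_univ _) hFC.injOn_intCast_zmod
    _ = α := ZMod.card α

/-- Corollary 3.21 b): an (α,β)-fundamental couple has length at most α. -/
theorem fundamental_couple_length_le (α β : ℕ) (hα : 0 < α) (hβ : 0 < β)
    (hcop : Nat.Coprime α β) (m : ℕ) (I J : ℕ → ℤ)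
    (hFC : IsFundamentalCouple α β m I J) :
    m + 1 ≤ α :=
  fundamental_couple_length_le_general α β hα m I J hFC
end

section
/- Let α, β be coprime positive integers and [I, J] = [(iₖ)ₖ₌₀^m, (jₖ)ₖ₌₀^m] an (α, β)-fundamental couple. Then i_k ≺ i_{k+1} for k = 1, ..., m-1, where i ≺ i' means a(i) > a(i') and b(i) < b(i') in the gap presentations. -/
/-!
Write `i_k = αβ - aα - bβ` and `i_{k+1} = αβ - a'α - b'β`. The gap `j_k` equals both
`i_k + sα` and `i_{k+1} + tβ` with `s, t > 0`, so
`j_k = αβ - (a - s)α - bβ = αβ - a'α - (b' - t)β`. Since `j_k` is a gap, `a - s ≥ 1` and `b' - t ≥ 1`, and both expressions are gap presentations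
of `j_k`; by uniqueness `a' = a - s < a` and `b = b' - t < b'`.
-/

namespace SG

variable {α β : ℕ}

theorem mul_add_mul_mem {x y : ℤ} (hx : 0 ≤ x) (hy : 0 ≤ y) : x * α + y * β ∈ SG α β :=
  ⟨x.toNat, y.toNat, by rw [Int.toNat_of_nonneg hx, Int.toNat_of_nonneg hy]⟩

end SG

namespace IsGap

variable {α β : ℕ} {a b : ℤ}

theorem one_le_fst (h : IsGap α β (α * β - a * α - b * β)) (hb : b ≤ α) : 1 ≤ a := by
  by_contra! ha
  refine h.2 ?_
  convert SG.mul_add_mul_mem (x := -a) (y := α - b) (by omega) (by omega)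
    using 1
  ring

theorem one_le_snd (h : IsGap α β (α * β - a * α - b * β)) (ha : a ≤ β) : 1 ≤ b := by
  by_contra! hb
  refine h.2 ?_
  convert SG.mul_add_mul_mem (x := β - a) (y := -b) (by omega) (by omega)
    using 1
  ring

end IsGap

theorem Nat.Coprime.eq_and_eq_of_mul_add_mul_eq {α β : ℕ} (hcop : Nat.Coprime α β) {a b a' b' : ℤ}
    (h : a * α + b * β = a' * α + b' * β) (ha : |a - a'| < β) : a = a' ∧ b = b' := by
  have hcop' : IsCoprime (β : ℤ) α := Int.isCoprime_iff_gcd_eq_one.mpr (by simpa using hcop.symm)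
  have hdvd : (β : ℤ) ∣ a - a' :=
    hcop'.dvd_of_dvd_mul_right ⟨b' - b, by linear_combination h⟩
  have ha' : a - a' = 0 := Int.eq_zero_of_abs_lt_dvd hdvd ha
  have hβ : (β : ℤ) ≠ 0 := (lt_of_le_of_lt (abs_nonneg _) ha).ne'
  have hb : b * β = b' * β := by linear_combination h - α * ha'
  exact ⟨sub_eq_zero.1 ha', mul_right_cancel₀ hβ hb⟩

theorem fundamental_couple_chain_general (α β : ℕ)
    (hcop : Nat.Coprime α β) (m : ℕ) (I J : ℕ → ℤ)
    (hFC : IsFundamentalCouple α β m I J) :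
    ∀ k, 1 ≤ k → k + 1 ≤ m → ∀ a b a' b' : ℤ,
      (1 ≤ a ∧ a < β ∧ 1 ≤ b ∧ b < α ∧ I k = (α : ℤ) * β - a * α - b * β) →
      (1 ≤ a' ∧ a' < β ∧ 1 ≤ b' ∧ b' < α ∧ I (k + 1) = (α : ℤ) * β - a' * α - b' * β) →
      a' < a ∧ b < b' := by
  rintro k hk hkm a b a' b' ⟨-, haβ, -, hbα, hIk⟩ ⟨ha'1, ha'β, -, -, hIk'⟩
  obtain ⟨-, -, hJgap, -, -, hαstep, hβstep, -, -⟩ := hFC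
  obtain ⟨⟨s, hs⟩, hIJ⟩ := hαstep k (by omega)
  obtain ⟨⟨t, ht⟩, hJI⟩ := hβstep k (by omega)
  have hs_pos : 0 < s := pos_of_mul_pos_right (hs ▸ sub_pos.2 hIJ) (Int.natCast_nonneg α)
  have ht_pos : 0 < t := pos_of_mul_pos_right (ht ▸ sub_pos.2 hJI) (Int.natCast_nonneg β)
  have hJ := hJgap k hk (by omega)
  have hJa : J k = α * β - (a - s) * α - b * β := by linear_combination hs + hIk
  have hJb : J k = α * β - a' * α - (b' - t) * β := by linear_combination ht + hIk'
  have has : 1 ≤ a - s := (hJa ▸ hJ).one_le_fst hbα.le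
  have hbt : 1 ≤ b' - t := (hJb ▸ hJ).one_le_snd ha'β.le
  obtain ⟨ha', hb'⟩ := hcop.eq_and_eq_of_mul_add_mul_eq (a := a - s) (b := b)
    (a' := a') (b' := b' - t) (by linear_combination hJa - hJb) (abs_lt.2 ⟨by omega, by omega⟩)
  omega

/-- Corollary 3.21 a): in an (α,β)-fundamental couple, `i_k ≺ i_{k+1}` for
`k = 1, …, m-1`, i.e. `a(i_k) > a(i_{k+1})` and `b(i_k) < b(i_{k+1})` in the
gap presentations. -/
theorem fundamental_couple_chain (α β : ℕ) (hα : 0 < α) (hβ : 0 < β)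
    (hcop : Nat.Coprime α β) (m : ℕ) (I J : ℕ → ℤ)
    (hFC : IsFundamentalCouple α β m I J) :
    ∀ k, 1 ≤ k → k + 1 ≤ m → ∀ a b a' b' : ℤ,
      (1 ≤ a ∧ a < β ∧ 1 ≤ b ∧ b < α ∧ I k = (α : ℤ) * β - a * α - b * β) →
      (1 ≤ a' ∧ a' < β ∧ 1 ≤ b' ∧ b' < α ∧ I (k + 1) = (α : ℤ) * β - a' * α - b' * β) →
      a' < a ∧ b < b' :=
  fundamental_couple_chain_general α β hcop m I J hFC
end

section
/- Let α, β be coprime positive integers and let [I, J] = [(iₖ)ₖ₌₀^m, (jₖ)ₖ₌₀^m] be a reduced (α, β)-balanced couple with nonnegative entries, i₀ = 0 and m ≥ 1. Then at least one of i₁, iₘ is a gap of ⟨α, β⟩. -/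
/-! Since `i₀ = 0`, reducedness at `i₀` gives `j₀ < αβ` or `jₘ < αβ`. In the first case `j₀` is a
multiple of `α` below `αβ` exceeding `i₁` by a positive multiple of `β`; writing `i₁ = aα + bβ`
would give `0 < j₀/α - a ≡ 0 (mod β)`, hence `j₀ ≥ αβ`. The second case is symmetric, with `iₘ`
in place of `i₁` and `α`, `β` exchanged. -/

lemma mem_SG_comm {α β : ℕ} {e : ℤ} : e ∈ SG α β ↔ e ∈ SG β α := by
  constructor <;> rintro ⟨a, b, rfl⟩ <;> exact ⟨b, a, add_comm _ _⟩

lemma isGap_of_nonneg_of_not_mem_SG {α β : ℕ} {e : ℤ} (he : 0 ≤ e) (hSG : e ∉ SG α β) :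
    IsGap α β e := by
  refine ⟨he.lt_of_ne ?_, hSG⟩
  rintro rfl
  exact hSG ⟨0, 0, by simp⟩

lemma not_mem_SG_of_dvd_of_lt_mul {α β : ℕ} (hcop : Nat.Coprime α β) {x i : ℤ}
    (hx : (α : ℤ) ∣ x) (hxi : (β : ℤ) ∣ x - i) (hix : i < x) (hxαβ : x < α * β) :
    i ∉ SG α β := by
  rintro ⟨a, b, rfl⟩
  obtain ⟨c, rfl⟩ := hx
  obtain ⟨d, hd⟩ := hxi
  have hcopZ : IsCoprime (β : ℤ) α := Int.isCoprime_iff_gcd_eq_one.mpr (by simpa using hcop.symm)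
  have hα : (0 : ℤ) ≤ α := Int.natCast_nonneg α
  have hβd : 0 < (β : ℤ) * d := hd ▸ sub_pos.mpr hix
  have heq : (c - a) * α = (d + b) * β := by linear_combination hd
  have hpos : 0 < (c - a) * α := by
    rw [heq]; nlinarith [Int.natCast_nonneg b, Int.natCast_nonneg β]
  have hca : 0 < c - a := pos_of_mul_pos_left hpos hα
  have hβ_le : (β : ℤ) ≤ c - a :=
    Int.le_of_dvd hca (hcopZ.dvd_of_dvd_mul_right ⟨d + b, by rw [heq]; ring⟩)
  nlinarith [Int.natCast_nonneg a]

theorem reduced_balanced_gap_general (α β : ℕ)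
    (hcop : Nat.Coprime α β) (m : ℕ) (hm : 1 ≤ m) (I J : ℕ → ℤ)
    (hRB : IsReducedBalancedCouple α β m I J)
    (hnonneg : ∀ k, k ≤ m → 0 ≤ I k ∧ 0 ≤ J k)
    (hI0 : I 0 = 0) :
    IsGap α β (I 1) ∨ IsGap α β (I m) := by
  obtain ⟨⟨hα_dvd, hβ_dvd, hβ_dvd_m, -⟩, hIJ, hIJ_succ, -, -, hmin₀, -, -⟩ := hRB
  rw [hI0, sub_zero, sub_zero] at hmin₀
  rw [hI0, sub_zero] at hβ_dvd_m
  rcases min_lt_iff.mp hmin₀ with hJm | hJ0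
  · refine .inr <| isGap_of_nonneg_of_not_mem_SG (hnonneg m le_rfl).1 <| mem_SG_comm.not.mpr ?_
    exact not_mem_SG_of_dvd_of_lt_mul hcop.symm hβ_dvd_m (hα_dvd m le_rfl).1 (hIJ m le_rfl)
      (by rwa [mul_comm])
  · refine .inl <| isGap_of_nonneg_of_not_mem_SG (hnonneg 1 hm).1 ?_
    have hα_dvd_0 := (hα_dvd 0 m.zero_le).1
    rw [hI0, sub_zero] at hα_dvd_0
    exact not_mem_SG_of_dvd_of_lt_mul hcop hα_dvd_0 (hβ_dvd 0 hm).1 (hIJ_succ 0 hm) hJ0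

/-- Lemma 3.24 a): for a reduced (α,β)-balanced couple with nonnegative
elements, `i₀ = 0` and `m ≥ 1`, at least one of `i₁`, `iₘ` is a gap of ⟨α, β⟩. -/
theorem reduced_balanced_gap (α β : ℕ) (hα : 0 < α) (hβ : 0 < β)
    (hcop : Nat.Coprime α β) (m : ℕ) (hm : 1 ≤ m) (I J : ℕ → ℤ)
    (hRB : IsReducedBalancedCouple α β m I J)
    (hnonneg : ∀ k, k ≤ m → 0 ≤ I k ∧ 0 ≤ J k)
    (hI0 : I 0 = 0) :
    IsGap α β (I 1) ∨ IsGap α β (I m) :=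
  reduced_balanced_gap_general α β hcop m hm I J hRB hnonneg hI0
end

section
/- Let H(t) = Σₙ hₙ tⁿ be a nonnegative formal Laurent series over ℤ satisfying condition (⋆): for every (α,β)-fundamental couple [I, J] and every n ∈ ℤ, Σ_{i∈I} h_{i+n} ≤ Σ_{j∈J} h_{j+n}. Then H(t)/(1 - t^β), i.e., the series with coefficients h'ₙ = Σ_{k≥0} h_{n - kβ}, is nonnegative and also satisfies condition (⋆). -/
/-!
Condition (⋆) is preserved by translating the coefficient sequence and by finite sums of
sequences satisfying it. The coefficients `h'ₙ = Σ_{k ≥ 0} h_{n - kβ}` are not a finite sum of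
translates of `h`, but since `h` vanishes below `bd`, on any finite set of indices they agree
with the truncation `Σ_{k ≤ N} h_{n - kβ}` for all large `N`; an inequality of (⋆) only involves
finitely many indices.
-/

open Finset Filter

namespace StarCondition

variable {α β : ℕ}

theorem comp_sub_const {h : ℤ → ℤ} (hh : StarCondition α β h) (c : ℤ) :
    StarCondition α β (fun x => h (x - c)) := by
  intro m I J hIJ n
  simpa only [add_sub_assoc] using hh m I J hIJ (n - c)

theorem finset_sum {ι : Type*} (s : Finset ι) {f : ι → ℤ → ℤ}
    (hf : ∀ i ∈ s, StarCondition α β (f i)) :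
    StarCondition α β (fun x => ∑ i ∈ s, f i x) := by
  intro m I J hIJ n
  rw [sum_comm, sum_comm (s := range (m + 1))]
  exact sum_le_sum fun i hi => hf i hi m I J hIJ n

end StarCondition

theorem sum_range_toNat_sub_eq_of_le {M : Type*} [AddCommMonoid M] {f : ℤ → M} {bd : ℤ}
    (hf : ∀ n, n < bd → f n = 0) {β : ℕ} (hβ : 0 < β) {x : ℤ} {N : ℕ}
    (hN : (x - bd).toNat ≤ N) :
    ∑ k ∈ range ((x - bd).toNat + 1), f (x - k * β) = ∑ k ∈ range (N + 1), f (x - k * β) := by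
  refine sum_subset (range_subset_range.2 (by omega)) fun k hkN hk => hf _ ?_
  simp only [mem_range, not_lt] at hkN hk
  have hkβ : (k : ℤ) ≤ k * β := le_mul_of_one_le_right k.cast_nonneg (by exact_mod_cast hβ)
  omega

theorem star_of_div_one_sub_pow_general (α β : ℕ) (hβ : 0 < β)
    (h : ℤ → ℤ) (hnonneg : ∀ n, 0 ≤ h n)
    (bd : ℤ) (hbd : ∀ n, n < bd → h n = 0) (hstar : StarCondition α β h)
    (h' : ℤ → ℤ)
    (hh' : ∀ n : ℤ, h' n =
      ∑ k ∈ Finset.range ((n - bd).toNat + 1), h (n - (k : ℤ) * β)) :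
    (∀ n, 0 ≤ h' n) ∧ StarCondition α β h' := by
  refine ⟨fun n => (hh' n).symm ▸ sum_nonneg fun k _ => hnonneg _, ?_⟩
  intro m I J hIJ n
  set g : ℕ → ℤ → ℤ := fun N x => ∑ k ∈ range (N + 1), h (x - k * β)
  have hg : ∀ N, StarCondition α β (g N) := fun N =>
    StarCondition.finset_sum _ fun k _ => hstar.comp_sub_const _
  have hev : ∀ x, ∀ᶠ N in atTop, h' x = g N x := fun x =>
    eventually_atTop.2 ⟨_, fun N hN => (hh' x).trans (sum_range_toNat_sub_eq_of_le hbd hβ hN)⟩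
  obtain ⟨N, hN⟩ := ((eventually_all_finset (range (m + 1))).2
    fun k _ => (hev (I k + n)).and (hev (J k + n))).exists
  rw [sum_congr rfl fun k hk => (hN k hk).1, sum_congr rfl fun k hk => (hN k hk).2]
  exact hg N m I J hIJ n

/-- Lemma 3.14 c): if a nonnegative Laurent series `H` satisfies condition (⋆),
then so does `H/(1 - t^β)`, whose coefficients are `h'ₙ = Σ_{k≥0} h_{n-kβ}`. -/
theorem star_of_div_one_sub_pow (α β : ℕ) (hα : 0 < α) (hβ : 0 < β)
    (hcop : Nat.Coprime α β) (h : ℤ → ℤ) (hnonneg : ∀ n, 0 ≤ h n)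
    (bd : ℤ) (hbd : ∀ n, n < bd → h n = 0) (hstar : StarCondition α β h)
    (h' : ℤ → ℤ)
    (hh' : ∀ n : ℤ, h' n =
      ∑ k ∈ Finset.range ((n - bd).toNat + 1), h (n - (k : ℤ) * β)) :
    (∀ n, 0 ≤ h' n) ∧ StarCondition α β h' :=
  star_of_div_one_sub_pow_general α β hβ h hnonneg bd hbd hstar h' hh'
end

section
/- Let α, β be coprime positive integers and H(t) = Σ_{n≥0} hₙ tⁿ a nonnegative series satisfying condition (⋆) with h₀ > 0. Then at least one of cα := min{h_{rα} : 0 < r < β} and cβ := min{h_{sβ} : 0 < s < α} is positive. -/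
/-!
If `h` vanished at some `rα` (`0 < r < β`) and at some `sβ` (`0 < s < α`), put
`e = rα + sβ - αβ`. Coprimality gives `e ≠ 0`, and a positive number of this shape is a gap
of `⟨α, β⟩`, so `[(0, e), (rα, sβ)]` is a fundamental couple when `e > 0`; when `e < 0` the
same holds for the complementary multiples `(β - r)α, (α - s)β`, whose couple shifted by `e`
has the same right-hand side `h(sβ) + h(rα)`. Either way (⋆) gives
`h 0 ≤ h 0 + h (±e) ≤ h (rα) + h (sβ) = 0`.
-/

lemma mul_add_mul_ne_mul {α β r s : ℕ} (hcop : Nat.Coprime α β) (hs0 : 0 < s) (hs : s < α) :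
    r * α + s * β ≠ α * β := by
  intro heq
  have hdvd : α ∣ s * β := (Nat.dvd_add_right (dvd_mul_left α r)).mp (heq ▸ dvd_mul_right α β)
  exact (Nat.le_of_dvd hs0 (hcop.dvd_of_dvd_mul_right hdvd)).not_gt hs

lemma isGap_mul_add_mul_sub_mul {α β r s : ℕ} (hcop : Nat.Coprime α β) (hr : r < β)
    (hs : s < α) (hpos : 0 < (r : ℤ) * α + s * β - α * β) :
    IsGap α β ((r : ℤ) * α + s * β - α * β) := by
  refine ⟨hpos, ?_⟩
  rintro ⟨a, b, hab⟩
  have hsplit : ((r : ℤ) - a) * α = ((α : ℤ) - s + b) * β := by linear_combination hab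
  have hdvd : (β : ℤ) ∣ (r : ℤ) - a :=
    (Nat.isCoprime_iff_coprime.mpr hcop).symm.dvd_of_dvd_mul_right
      ⟨(α : ℤ) - s + b, by linear_combination hsplit⟩
  have hrhs : 0 < ((α : ℤ) - s + b) * β := mul_pos (by omega) (by omega)
  have hra : 0 < (r : ℤ) - a := by nlinarith
  have := Int.le_of_dvd hra hdvd
  omega

lemma isFundamentalCouple_one {α β r s : ℕ} (hcop : Nat.Coprime α β) (hr : r < β)
    (hs : s < α) (hpos : 0 < (r : ℤ) * α + s * β - α * β) :
    IsFundamentalCouple α β 1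
      (fun k => if k = 0 then 0 else (r : ℤ) * α + s * β - α * β)
      (fun k => if k = 0 then (r : ℤ) * α else (s : ℤ) * β) := by
  have hr' : (r : ℤ) < β := by exact_mod_cast hr
  have hs' : (s : ℤ) < α := by exact_mod_cast hs
  have hr0 : (0 : ℤ) ≤ r := by positivity
  have hs0 : (0 : ℤ) ≤ s := by positivity
  refine ⟨rfl, ?_, by omega, ?_, ?_, ?_, ?_, ?_, by omega⟩
  · intro k hk1 hk
    obtain rfl : k = 1 := by omega
    exact isGap_mul_add_mul_sub_mul hcop hr hs hpos
  · simp only [↓reduceIte]; nlinarith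
  · simp only [one_ne_zero, ↓reduceIte]; nlinarith
  · intro k hk
    interval_cases k <;> simp only [one_ne_zero, ↓reduceIte]
    · exact ⟨⟨r, by ring⟩, by nlinarith⟩
    · exact ⟨⟨(β : ℤ) - r, by ring⟩, by nlinarith⟩
  · intro k hk
    obtain rfl : k = 0 := by omega
    simp only [zero_add, one_ne_zero, ↓reduceIte]
    exact ⟨⟨(α : ℤ) - s, by ring⟩, by nlinarith⟩
  · simp only [one_ne_zero, ↓reduceIte]
    exact ⟨⟨s, by ring⟩, by positivity⟩

lemma StarCondition.add_le_add {α β r s : ℕ} {h : ℤ → ℤ} (hstar : StarCondition α β h)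
    (hcop : Nat.Coprime α β) (hr : r < β) (hs : s < α)
    (hpos : 0 < (r : ℤ) * α + s * β - α * β) (n : ℤ) :
    h n + h (n + (r * α + s * β - α * β)) ≤ h (n + r * α) + h (n + s * β) := by
  have key := hstar 1 _ _ (isFundamentalCouple_one hcop hr hs hpos) n
  simp only [Finset.sum_range_succ, Finset.sum_range_zero, one_ne_zero, ↓reduceIte,
    zero_add] at key
  simpa only [add_comm n] using key

lemma StarCondition.exists_add_le {α β r s : ℕ} {h : ℤ → ℤ} (hstar : StarCondition α β h)
    (hcop : Nat.Coprime α β) (hr0 : 0 < r) (hr : r < β) (hs0 : 0 < s) (hs : s < α) :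
    ∃ d, h 0 + h d ≤ h (r * α) + h (s * β) := by
  have hne : (r : ℤ) * α + s * β ≠ α * β := by exact_mod_cast mul_add_mul_ne_mul hcop hs0 hs
  rcases hne.lt_or_gt with hlt | hgt
  · have key := hstar.add_le_add hcop (Nat.sub_lt (by omega) hr0) (Nat.sub_lt (by omega) hs0)
      (by push_cast [Nat.cast_sub hr.le, Nat.cast_sub hs.le]; linarith)
      ((r : ℤ) * α + s * β - α * β)
    push_cast [Nat.cast_sub hr.le, Nat.cast_sub hs.le] at key
    rw [show (r : ℤ) * α + s * β - α * β + ((β - r) * α + (α - s) * β - α * β) = 0 by ring,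
      show (r : ℤ) * α + s * β - α * β + (β - r) * α = s * β by ring,
      show (r : ℤ) * α + s * β - α * β + (α - s) * β = r * α by ring] at key
    exact ⟨(r : ℤ) * α + s * β - α * β, by linarith⟩
  · exact ⟨_, by simpa only [zero_add] using hstar.add_le_add hcop hr hs (by linarith) 0⟩

theorem pos_min_on_multiples_general (α β : ℕ)
    (hcop : Nat.Coprime α β) (h : ℤ → ℤ) (hnonneg : ∀ n, 0 ≤ h n)
    (hstar : StarCondition α β h)
    (h0 : 0 < h 0) :
    (∀ r : ℕ, 0 < r → r < β → 0 < h ((r : ℤ) * α)) ∨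
      (∀ s : ℕ, 0 < s → s < α → 0 < h ((s : ℤ) * β)) := by
  by_contra! hc
  obtain ⟨⟨r, hr0, hr, hhr⟩, ⟨s, hs0, hs, hhs⟩⟩ := hc
  obtain ⟨d, hd⟩ := hstar.exists_add_le hcop hr0 hr hs0 hs
  linarith [hnonneg d]

/-- Proposition 3.17: if a nonnegative series `Σ_{n≥0} hₙtⁿ` satisfies (⋆) and
`h₀ > 0`, then `c_α = min{h_{rα} : 0 < r < β}` or `c_β = min{h_{sβ} : 0 < s < α}`
is positive. -/
theorem pos_min_on_multiples (α β : ℕ) (hα : 0 < α) (hβ : 0 < β)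
    (hcop : Nat.Coprime α β) (h : ℤ → ℤ) (hnonneg : ∀ n, 0 ≤ h n)
    (hneg : ∀ n : ℤ, n < 0 → h n = 0) (hstar : StarCondition α β h)
    (h0 : 0 < h 0) :
    (∀ r : ℕ, 0 < r → r < β → 0 < h ((r : ℤ) * α)) ∨
      (∀ s : ℕ, 0 < s → s < α → 0 < h ((s : ℤ) * β)) :=
  pos_min_on_multiples_general α β hcop h hnonneg hstar h0
end

section
/- Let R = 𝔽[X,Y] with deg X = 3, deg Y = 5 over a field 𝔽, and let M = R ⊕ (R/𝔪)(-1) ⊕ (R/𝔪)(-2), where 𝔪 = (X, Y). Then every finitely generated graded R-module N with the same Hilbert series as M satisfies depth(N) = 0, although (1 - t¹⁵)·H_M(t) is nonnegative. -/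
/-! Finite generation makes every graded piece finite dimensional, so the Hilbert function says
that `N₁`, `N₂`, `N₁₁` are lines and `N₄ = N₇ = 0`. Hence `X v = 0` and `Y w = 0` for nonzero
`v ∈ N₁`, `w ∈ N₂`. Following `v, Y v, Y² v` and `w, X w, X² w, X³ w` until they vanish gives a
nonzero element killed by `𝔪`, unless `Y² v` and `X³ w` are both nonzero; then both span the
line `N₁₁`, so `X³ w` is a multiple of `Y² v` and is killed by `X` as well. -/

open MvPolynomial

/-- The Hilbert function of `M = R ⊕ (R/𝔪)(-1) ⊕ (R/𝔪)(-2)` for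
`R = 𝔽[X,Y]`, `deg X = 3`, `deg Y = 5`: in degree `j` it is
`#{(a,b) ∈ ℕ² : 3a + 5b = j} + [j = 1] + [j = 2]`. -/
def hilbM (j : ℕ) : ℕ :=
  ((Finset.range (j + 1) ×ˢ Finset.range (j + 1)).filter
      (fun p => 3 * p.1 + 5 * p.2 = j)).card +
    (if j = 1 then 1 else 0) + (if j = 2 then 1 else 0)

open DirectSum
open scoped Pointwise

section WeightedGradedModule

variable {σ F N : Type*} [Field F] [AddCommGroup N] [Module (MvPolynomial σ F) N] [Module F N]
  {w : σ → ℕ} {𝒩 : ℕ → Submodule F N}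

theorem decompose_smul_eq_zero_of_lt [Decomposition 𝒩]
    [SetLike.GradedSMul (weightedHomogeneousSubmodule F w) 𝒩]
    {p : MvPolynomial σ F} {i j : ℕ} (hp : p ∈ weightedHomogeneousSubmodule F w i) (hji : j < i)
    (x : N) : (decompose 𝒩 (p • x) j : N) = 0 := by
  classical
  rw [← sum_support_decompose 𝒩 x, Finset.smul_sum, decompose_sum, DFinsupp.finsetSum_apply,
    Submodule.coe_sum]
  exact Finset.sum_eq_zero fun d _ =>
    decompose_of_mem_ne 𝒩 (SetLike.GradedSMul.smul_mem hp (decompose 𝒩 x d).2) (by simp; omega)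

theorem span_monomial_smul_eq_top [IsScalarTower F (MvPolynomial σ F) N] {S : Set N}
    (hS : Submodule.span (MvPolynomial σ F) S = ⊤) :
    Submodule.span F (Set.range (fun μ : σ →₀ ℕ => monomial μ (1 : F)) • S) = ⊤ := by
  rw [Submodule.span_smul_of_span_eq_top _ S, hS, Submodule.restrictScalars_top]
  simpa using (basisMonomials σ F).span_eq

theorem finiteDimensional_of_gradedSMul_weightedHomogeneous [Finite σ]
    [IsScalarTower F (MvPolynomial σ F) N] [Module.Finite (MvPolynomial σ F) N] [Decomposition 𝒩]
    [SetLike.GradedSMul (weightedHomogeneousSubmodule F w) 𝒩] (hw : ∀ i, w i ≠ 0) (j : ℕ) :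
    FiniteDimensional F (𝒩 j) := by
  obtain ⟨S, hS⟩ := Module.Finite.fg_top (R := MvPolynomial σ F) (M := N)
  set G : Set N := (fun q : (σ →₀ ℕ) × N => (decompose 𝒩 (monomial q.1 (1 : F) • q.2) j : N)) ''
    ({μ | Finsupp.weight w μ ≤ j} ×ˢ S)
  have hG : G.Finite := ((Finsupp.finite_of_nat_weight_le w hw j).prod S.finite_toSet).image _
  have hcomponent (y : N) : (decompose 𝒩 y j : N) ∈ Submodule.span F G := by
    have hy : y ∈ Submodule.span F
        (Set.range (fun μ : σ →₀ ℕ => monomial μ (1 : F)) • (S : Set N)) := by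
      rw [span_monomial_smul_eq_top hS]; trivial
    induction hy using Submodule.span_induction with
    | mem y hy =>
      obtain ⟨_, ⟨μ, rfl⟩, s, hs, rfl⟩ := hy
      by_cases hμ : Finsupp.weight w μ ≤ j
      · exact Submodule.subset_span ⟨(μ, s), ⟨hμ, hs⟩, rfl⟩
      · rw [decompose_smul_eq_zero_of_lt (isWeightedHomogeneous_monomial w μ 1 rfl) (by omega)]
        exact Submodule.zero_mem _
    | zero => simp
    | add y z _ _ hy hz => simpa using add_mem hy hz
    | smul c y _ hy =>
      rw [decompose_smul, DirectSum.smul_apply, Submodule.coe_smul]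
      exact Submodule.smul_mem _ c hy
  have : FiniteDimensional F (Submodule.span F G) := FiniteDimensional.span_of_finite F hG
  exact Submodule.finiteDimensional_of_le fun x hx => decompose_of_mem_same 𝒩 hx ▸ hcomponent x

end WeightedGradedModule

section Socle

variable {R M : Type*} [CommRing R] [AddCommGroup M] [Module R M]

theorem exists_ne_zero_smul_eq_zero_of_pow_smul_eq_zero {a b : R} {x : M} (hx : x ≠ 0)
    (ha : a • x = 0) {n : ℕ} (hb : b ^ n • x = 0) : ∃ t : M, t ≠ 0 ∧ a • t = 0 ∧ b • t = 0 := by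
  induction n generalizing x with
  | zero => exact absurd (by simpa using hb) hx
  | succ n ih =>
    by_cases hbx : b • x = 0
    · exact ⟨x, hx, ha, hbx⟩
    · exact ih hbx (by rw [smul_comm, ha, smul_zero]) (by rwa [← mul_smul, ← pow_succ])

end Socle

theorem X_pow_mem_weightedHomogeneousSubmodule {σ F : Type*} [CommSemiring F] (w : σ → ℕ)
    (i : σ) (k : ℕ) :
    (X i ^ k : MvPolynomial σ F) ∈ weightedHomogeneousSubmodule F w (k * w i) := by
  simpa using (isWeightedHomogeneous_X F w i).pow k

theorem exists_ne_zero_X_smul_eq_zero {F N : Type*} [Field F] [AddCommGroup N]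
    [Module (MvPolynomial (Fin 2) F) N] [Module F N] [IsScalarTower F (MvPolynomial (Fin 2) F) N]
    {𝒩 : ℕ → Submodule F N} [SetLike.GradedSMul (weightedHomogeneousSubmodule F ![3, 5]) 𝒩]
    (h4 : 𝒩 4 = ⊥) (h7 : 𝒩 7 = ⊥) (h11 : Module.finrank F (𝒩 11) = 1) {v w : N}
    (hv : v ∈ 𝒩 1) (hv0 : v ≠ 0) (hw : w ∈ 𝒩 2) (hw0 : w ≠ 0) :
    ∃ t : N, t ≠ 0 ∧ (X 0 : MvPolynomial (Fin 2) F) • t = 0 ∧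
      (X 1 : MvPolynomial (Fin 2) F) • t = 0 := by
  have hmem (i : Fin 2) (k d : ℕ) {x : N} (hx : x ∈ 𝒩 d) :
      (X i ^ k : MvPolynomial (Fin 2) F) • x ∈ 𝒩 (k * ![3, 5] i + d) :=
    SetLike.GradedSMul.smul_mem (X_pow_mem_weightedHomogeneousSubmodule _ i k) hx
  have hXv : (X 0 : MvPolynomial (Fin 2) F) • v = 0 := by simpa [h4] using hmem 0 1 1 hv
  have hYw : (X 1 : MvPolynomial (Fin 2) F) • w = 0 := by simpa [h7] using hmem 1 1 2 hw
  by_cases hu : (X 1 ^ 2 : MvPolynomial (Fin 2) F) • v = 0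
  · exact exists_ne_zero_smul_eq_zero_of_pow_smul_eq_zero hv0 hXv hu
  by_cases hs : (X 0 ^ 3 : MvPolynomial (Fin 2) F) • w = 0
  · obtain ⟨t, ht, hYt, hXt⟩ := exists_ne_zero_smul_eq_zero_of_pow_smul_eq_zero hw0 hYw hs
    exact ⟨t, ht, hXt, hYt⟩
  have hu11 : (X 1 ^ 2 : MvPolynomial (Fin 2) F) • v ∈ 𝒩 11 := hmem 1 2 1 hv
  have hs11 : (X 0 ^ 3 : MvPolynomial (Fin 2) F) • w ∈ 𝒩 11 := hmem 0 3 2 hw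
  obtain ⟨c, hc⟩ := (finrank_eq_one_iff_of_nonzero' ⟨_, hu11⟩ (by simpa using hu)).mp h11 ⟨_, hs11⟩
  have hsu : (X 0 ^ 3 : MvPolynomial (Fin 2) F) • w = c • (X 1 ^ 2 : MvPolynomial (Fin 2) F) • v :=
    (congrArg Subtype.val hc).symm
  refine ⟨_, hs, ?_, by rw [smul_comm, hYw, smul_zero]⟩
  rw [hsu, smul_comm, smul_comm (X 0 : MvPolynomial (Fin 2) F), hXv, smul_zero, smul_zero]

theorem hilbM_le_hilbM_add_fifteen (j : ℕ) : hilbM j ≤ hilbM (j + 15) := by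
  rcases Nat.lt_or_ge j 3 with h | h
  · interval_cases j <;> decide
  · unfold hilbM
    rw [if_neg (by omega : ¬ j = 1), if_neg (by omega : ¬ j = 2),
      if_neg (by omega : ¬ j + 15 = 1), if_neg (by omega : ¬ j + 15 = 2)]
    -- multiplication by `X⁵`, of degree 15
    apply Finset.card_le_card_of_injOn (fun p => (p.1 + 5, p.2))
    · rintro ⟨a, b⟩ hp
      simp only [Finset.coe_filter, Finset.mem_product, Finset.mem_range, Set.mem_ofPred_eq] at hp ⊢
      omega
    · rintro ⟨a, b⟩ _ ⟨c, d⟩ _ hcd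
      simp only [Prod.mk.injEq] at hcd ⊢
      omega

/-- Example 3.1: over `R = 𝔽[X,Y]` with `deg X = 3`, `deg Y = 5`, every finitely
generated graded `R`-module `N` with the same Hilbert series as
`M = R ⊕ (R/𝔪)(-1) ⊕ (R/𝔪)(-2)` has depth 0 (i.e. every element of the maximal
graded ideal `𝔪 = (X, Y)` is a zerodivisor on `N`), although
`(1 - t¹⁵)·H_M(t)` is nonnegative. -/
theorem depth_zero_example (F : Type*) [Field F]
    (N : Type*) [AddCommGroup N] [Module (MvPolynomial (Fin 2) F) N]
    [Module F N] [IsScalarTower F (MvPolynomial (Fin 2) F) N]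
    [Module.Finite (MvPolynomial (Fin 2) F) N]
    (𝒩 : ℕ → Submodule F N)
    (hdecomp : DirectSum.IsInternal 𝒩)
    (hgraded : ∀ i j : ℕ, ∀ r ∈ weightedHomogeneousSubmodule F ![3, 5] i,
      ∀ x ∈ 𝒩 j, r • x ∈ 𝒩 (i + j))
    (hhilb : ∀ j : ℕ, Module.finrank F (𝒩 j) = hilbM j) :
    (∀ z ∈ Ideal.span ({X 0, X 1} : Set (MvPolynomial (Fin 2) F)), ∃ v : N, v ≠ 0 ∧ z • v = 0) ∧
      (∀ j : ℕ, hilbM j ≤ hilbM (j + 15)) := by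
  let := hdecomp.chooseDecomposition
  have : SetLike.GradedSMul (weightedHomogeneousSubmodule F ![3, 5]) 𝒩 :=
    ⟨fun i j _ _ hr hx => hgraded i j _ hr _ hx⟩
  have hbot (j : ℕ) (hj : hilbM j = 0) : 𝒩 j = ⊥ := by
    have := finiteDimensional_of_gradedSMul_weightedHomogeneous (w := ![3, 5]) (𝒩 := 𝒩)
      (by decide) j
    exact Submodule.finrank_eq_zero.mp (by rw [hhilb, hj])
  have hne (j : ℕ) (hj : hilbM j = 1) : ∃ x ∈ 𝒩 j, x ≠ 0 :=
    Submodule.exists_mem_ne_zero_of_ne_bot fun h => by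
      have := hhilb j
      rw [h, finrank_bot, hj] at this
      exact zero_ne_one this
  obtain ⟨v, hv, hv0⟩ := hne 1 (by decide)
  obtain ⟨w, hw, hw0⟩ := hne 2 (by decide)
  obtain ⟨t, ht0, hXt, hYt⟩ := exists_ne_zero_X_smul_eq_zero (hbot 4 (by decide))
    (hbot 7 (by decide)) (by rw [hhilb]; decide) hv hv0 hw hw0
  refine ⟨fun z hz => ?_, hilbM_le_hilbM_add_fifteen⟩
  obtain ⟨a, b, rfl⟩ := Ideal.mem_span_pair.mp hz
  exact ⟨t, ht0, by rw [add_smul, mul_smul, mul_smul, hXt, hYt, smul_zero, smul_zero, add_zero]⟩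
end
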